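/- arXiv:2306.09556 — 2 statements merged into one kernel-verified Lean document; each statement's English description precedes it below -/
import Mathlib

section
/- With notation as in the classification of GL_M(O) ⋉ U⁻_{M,N}(F)-orbits on Gr_N: the stabilizer of L_{(λ,(θ,θ'))} in U⁻_{M,N}(F) is contained in the kernel of the character χ (sending (u_{ij}) to the t^{-1}-coefficient of Σ_i u_{i+1,i} over rows i = M+1,...,N-1) if and only if θ_{M+1} ≤ θ'_1 ≤ θ'_2 ≤ ... ≤ θ'_{N-M-1}. -/
/- Common setup: `F = ℂ((t))` the field of formal Laurent series, `O = ℂ[[t]]` its ring of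
integers (elements with no negative coefficients), `tpow k = t^k`.  `InGLO A` says that the
square matrix `A` lies in `GL(O)`, i.e. both `A` and an inverse of `A` have entries in `O`. -/

noncomputable section

abbrev F : Type := LaurentSeries ℂ

/-- `t^k` for `k : ℤ`, where `t` is the uniformizer of `ℂ((t))`. -/
noncomputable def tpow (k : ℤ) : F := (HahnSeries.single (1 : ℤ) (1 : ℂ) : F) ^ k

/-- The ring of integers `O = ℂ[[t]] ⊆ ℂ((t))`. -/
def Oint : Set F := {f : F | ∀ m : ℤ, m < 0 → f.coeff m = 0}

/-- `A ∈ GL_n(O)`. -/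
def InGLO {n : ℕ} (A : Matrix (Fin n) (Fin n) F) : Prop :=
  ∃ B : Matrix (Fin n) (Fin n) F,
    (∀ i j, A i j ∈ Oint) ∧ (∀ i j, B i j ∈ Oint) ∧ A * B = 1 ∧ B * A = 1

/-- Block-diagonal embedding of an `M×M` matrix into the top-left corner of an `n×n`
matrix, with `1`'s on the rest of the diagonal. -/
noncomputable def embTop (M n : ℕ) (g : Matrix (Fin M) (Fin M) F) :
    Matrix (Fin n) (Fin n) F := fun i j =>
  if hi : (i : ℕ) < M then
    (if hj : (j : ℕ) < M then g ⟨i, hi⟩ ⟨j, hj⟩ else 0)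
  else (if (i : ℕ) = (j : ℕ) then 1 else 0)

/-- `u ∈ U⁻_{M,N}(F)`, the unipotent radical of the negative parabolic of type
`(M+1,1,…,1)` in `GL_N`: identity diagonal, and (0-based) the only nonzero off-diagonal
entries are in rows `i ≥ M+1` and columns `j < i`. -/
def InUminus (M : ℕ) {n : ℕ} (u : Matrix (Fin n) (Fin n) F) : Prop :=
  (∀ i, u i i = 1) ∧
  ∀ i j : Fin n, i ≠ j → ((i : ℕ) ≤ M ∨ (i : ℕ) ≤ (j : ℕ)) → u i j = 0

/-- The representative `L_{(λ,(θ,θ'))} ∈ GL_N(F)`, `N = M+1+K`: the upper-left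
`(M+1)×(M+1)` block has diagonal `t^{λ_i+θ_i}` (`i ≤ M`) and last row
`(t^{θ_1},…,t^{θ_{M+1}})`, and the lower-right block is `diag(t^{θ'_1},…,t^{θ'_K})`. -/
noncomputable def LmatN (M K : ℕ) (lam : Fin M → ℤ) (th : Fin (M + 1) → ℤ)
    (th' : Fin K → ℤ) : Matrix (Fin (M + 1 + K)) (Fin (M + 1 + K)) F := fun i j =>
  if hi : (i : ℕ) < M then
    (if (i : ℕ) = (j : ℕ) then tpow (lam ⟨i, hi⟩ + th ⟨i, by omega⟩) else 0)
  else if hi2 : (i : ℕ) = M then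
    (if hj : (j : ℕ) < M + 1 then tpow (th ⟨j, hj⟩) else 0)
  else if (i : ℕ) = (j : ℕ) then
    tpow (th' ⟨(i : ℕ) - (M + 1), by have := i.isLt; omega⟩)
  else 0

/-- The character `χ : U⁻_{M,N}(F) → ℂ`, sending `u` to the `t^{-1}`-coefficient of the
sum of the subdiagonal entries `u_{i+1,i}` over rows `i = M+1, …, N-1` (1-based). -/
noncomputable def chiU (M K : ℕ)
    (u : Matrix (Fin (M + 1 + K)) (Fin (M + 1 + K)) F) : ℂ :=
  ∑ k : Fin K,
    (u ⟨M + 1 + (k : ℕ), by have := k.isLt; omega⟩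
       ⟨M + (k : ℕ), by have := k.isLt; omega⟩).coeff (-1)

/-! Indices are 1-based here. For `M+1 ≤ i < N`, column `i` of `L` is `t^{c_i} e_i` and row
`i+1` is `t^{θ'_{i-M}} e_{i+1}`, where `c_{M+1} = θ_{M+1}` and `c_i = θ'_{i-M-1}` for `i > M+1`.
So `u L = L C` gives `u_{i+1,i} = t^{θ'_{i-M} - c_i} C_{i+1,i}`, and when all `c_i ≤ θ'_{i-M}`
(the claimed chain of inequalities) each summand of `χ(u)` is a coefficient of negative degree of
an entry of `C ∈ GL_N(O)`, hence zero. Conversely, if `c_i > θ'_{i-M}`, take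
`u = 1 + t⁻¹ E_{i+1,i} P`, where the row operation `P` (trivial unless `i = M+1`) clears row `i`
of `L` outside the diagonal using the rows above it. Then
`u L = L (1 + t^{c_i - 1 - θ'_{i-M}} E_{i+1,i})`, the last factor lies in `GL_N(O)`, and
`χ(u) = 1`. -/

section Laurent

lemma tpow_eq_single (k : ℤ) : tpow k = HahnSeries.single k 1 :=
  (RatFunc.single_zpow k).symm

lemma tpow_add (a b : ℤ) : tpow (a + b) = tpow a * tpow b :=
  zpow_add₀ (HahnSeries.single_ne_zero one_ne_zero) a b

lemma tpow_zero : tpow 0 = 1 := zpow_zero _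

lemma coeff_tpow_mul (k m : ℤ) (f : F) : (tpow k * f).coeff m = f.coeff (m - k) := by
  rw [tpow_eq_single, HahnSeries.coeff_single_mul, one_mul]

lemma tpow_mem_Oint {k : ℤ} (hk : 0 ≤ k) : tpow k ∈ Oint := by
  intro m hm
  rw [tpow_eq_single, HahnSeries.coeff_single_of_ne (by omega)]

lemma zero_mem_Oint : (0 : F) ∈ Oint := fun _ _ => rfl

lemma add_mem_Oint {f g : F} (hf : f ∈ Oint) (hg : g ∈ Oint) : f + g ∈ Oint := by
  intro m hm
  rw [HahnSeries.coeff_add, hf m hm, hg m hm, add_zero]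

lemma one_mem_Oint : (1 : F) ∈ Oint := tpow_zero ▸ tpow_mem_Oint le_rfl

lemma neg_mem_Oint {f : F} (hf : f ∈ Oint) : -f ∈ Oint := by
  intro m hm
  rw [HahnSeries.coeff_neg, hf m hm, neg_zero]

lemma smul_piSingle {ι : Type*} [DecidableEq ι] (a x : F) (i : ι) :
    a • (Pi.single i x : ι → F) = Pi.single i (a * x) := by
  funext b
  simp [Pi.single_apply]

end Laurent

namespace Matrix

variable {l m n α : Type*}

theorem vecMulVec_single_one_single [MulZeroOneClass α] [DecidableEq l] [DecidableEq m]
    (i : l) (j : m) (x : α) : vecMulVec (Pi.single i 1) (Pi.single j x) = single i j x := by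
  ext a b
  rcases eq_or_ne a i with rfl | ha <;> rcases eq_or_ne b j with rfl | hb <;>
    simp [vecMulVec_apply, *, Ne.symm]

variable [Fintype n] [DecidableEq n] [NonUnitalNonAssocSemiring α]

theorem mul_apply_of_col_eq_single {A : Matrix l n α} {B : Matrix n m α} {j : m} {r : n} {x : α}
    (hB : B.col j = Pi.single r x) (i : l) : (A * B) i j = A i r * x := by
  rw [show (A * B) i j = A i ⬝ᵥ B.col j from rfl, hB, dotProduct_single]

theorem mul_apply_of_row_eq_single {A : Matrix l n α} {B : Matrix n m α} {i : l} {r : n} {x : α}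
    (hA : A.row i = Pi.single r x) (j : m) : (A * B) i j = x * B r j := by
  rw [show (A * B) i j = A.row i ⬝ᵥ B.col j from rfl, hA, single_dotProduct]
  rfl

theorem mul_single_of_col_eq_single [DecidableEq l] [DecidableEq m] {A : Matrix l n α} {i : n}
    {r : l} {a : α} (hA : A.col i = Pi.single r a) (j : m) (x : α) :
    A * single i j x = single r j (a * x) := by
  ext p q
  by_cases hq : q = j
  · subst hq
    rw [mul_single_apply_same, ← col_apply A, hA]
    by_cases hp : p = r
    · subst hp; simp
    · simp [hp, Ne.symm hp]
  · rw [mul_single_apply_of_ne _ _ _ _ _ hq, single_apply_of_col_ne _ _ (Ne.symm hq)]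

end Matrix

section Index

variable {M K : ℕ}

def topIdx (i : Fin M) : Fin (M + 1 + K) := ⟨i, by omega⟩

def tailIdx (k : Fin (K + 1)) : Fin (M + 1 + K) := ⟨M + k, by omega⟩

lemma topIdx_or_tailIdx (a : Fin (M + 1 + K)) :
    (∃ i : Fin M, a = topIdx i) ∨ ∃ k : Fin (K + 1), a = tailIdx k := by
  by_cases ha : (a : ℕ) < M
  · exact .inl ⟨⟨a, ha⟩, rfl⟩
  · exact .inr ⟨⟨a - M, by omega⟩, Fin.ext (by simp [tailIdx]; omega)⟩

lemma topIdx_ne_tailIdx (i : Fin M) (k : Fin (K + 1)) :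
    (topIdx i : Fin (M + 1 + K)) ≠ tailIdx k :=
  fun h => by have := congrArg Fin.val h; simp [topIdx, tailIdx] at this; omega

lemma tailIdx_injective : Function.Injective (tailIdx : Fin (K + 1) → Fin (M + 1 + K)) :=
  fun k k' h => Fin.ext (by have := congrArg Fin.val h; simpa [tailIdx] using this)

lemma tailIdx_succ_ne_castSucc (k : Fin K) :
    (tailIdx k.succ : Fin (M + 1 + K)) ≠ tailIdx k.castSucc :=
  tailIdx_injective.ne (Fin.castSucc_lt_succ (i := k)).ne'

lemma topIdx_injective : Function.Injective (topIdx : Fin M → Fin (M + 1 + K)) :=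
  fun i i' h => Fin.ext (by simpa [topIdx] using congrArg Fin.val h)

lemma chiU_eq_sum (u : Matrix (Fin (M + 1 + K)) (Fin (M + 1 + K)) F) :
    chiU M K u = ∑ k : Fin K, (u (tailIdx k.succ) (tailIdx k.castSucc)).coeff (-1) := by
  refine Finset.sum_congr rfl fun k _ => ?_
  congr 3
  simp only [Fin.val_succ]
  omega

end Index

section Representative

variable {M K : ℕ} (lam : Fin M → ℤ) (th : Fin (M + 1) → ℤ) (th' : Fin K → ℤ)

lemma LmatN_col_tailIdx (k : Fin (K + 1)) :
    (LmatN M K lam th th').col (tailIdx k) =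
      Pi.single (tailIdx k) (tpow (Matrix.vecCons (th (Fin.last M)) th' k)) := by
  funext r
  induction k using Fin.cases <;>
    simp only [Matrix.col_apply, LmatN, Pi.single_apply, tailIdx, Fin.ext_iff, Fin.val_zero,
      Fin.val_succ, Matrix.cons_val_zero, Matrix.cons_val_succ] <;>
    split_ifs <;> first | rfl | omega | (congr 2; apply Fin.ext; simp; omega)

lemma LmatN_row_tailIdx_succ (k : Fin K) :
    (LmatN M K lam th th').row (tailIdx k.succ) = Pi.single (tailIdx k.succ) (tpow (th' k)) := by
  funext r
  simp only [Matrix.row_apply, LmatN, Fin.val_succ, Pi.single_apply, tailIdx, Fin.ext_iff]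
  split_ifs <;> first | rfl | omega | (congr 2; apply Fin.ext; simp; omega)

lemma LmatN_row_topIdx (i : Fin M) :
    (LmatN M K lam th th').row (topIdx i) =
      Pi.single (topIdx i) (tpow (lam i + th i.castSucc)) := by
  funext r
  simp only [Matrix.row_apply, LmatN, Pi.single_apply, topIdx, Fin.ext_iff]
  split_ifs <;> first | rfl | omega

lemma LmatN_row_tailIdx (k : Fin (K + 1)) :
    (LmatN M K lam th th').row (tailIdx k) =
      ∑ i : Fin M, Pi.single (topIdx i) (LmatN M K lam th th' (tailIdx k) (topIdx i)) +
        Pi.single (tailIdx k) (tpow (Matrix.vecCons (th (Fin.last M)) th' k)) := by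
  funext b
  simp only [Pi.add_apply, Finset.sum_apply]
  rcases topIdx_or_tailIdx b with ⟨i, rfl⟩ | ⟨k', rfl⟩
  · rw [Finset.sum_eq_single i (fun i' _ hi' => Pi.single_eq_of_ne
      (topIdx_injective.ne hi').symm _) (by simp), Pi.single_eq_same,
      Pi.single_eq_of_ne (topIdx_ne_tailIdx i k) _, add_zero, Matrix.row_apply]
  · rw [Finset.sum_eq_zero (fun i _ => Pi.single_eq_of_ne (topIdx_ne_tailIdx i k').symm _),
      zero_add, Matrix.row_apply, ← Matrix.col_apply (LmatN M K lam th th'), LmatN_col_tailIdx]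
    by_cases hk : k = k'
    · subst hk; simp
    · simp [tailIdx_injective.ne hk, tailIdx_injective.ne (Ne.symm hk)]

end Representative

section Stabilizer

variable {M K : ℕ} {lam : Fin M → ℤ} {th : Fin (M + 1) → ℤ} {th' : Fin K → ℤ}
  {u C : Matrix (Fin (M + 1 + K)) (Fin (M + 1 + K)) F}

lemma apply_tailIdx_of_mul_LmatN_eq (heq : u * LmatN M K lam th th' = LmatN M K lam th th' * C)
    (k : Fin K) :
    u (tailIdx k.succ) (tailIdx k.castSucc) =
      tpow (th' k - Matrix.vecCons (th (Fin.last M)) th' k.castSucc) *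
        C (tailIdx k.succ) (tailIdx k.castSucc) := by
  set c := Matrix.vecCons (th (Fin.last M)) th' k.castSucc
  have h := congr_fun₂ heq (tailIdx k.succ) (tailIdx k.castSucc)
  rw [Matrix.mul_apply_of_col_eq_single (LmatN_col_tailIdx lam th th' _),
    Matrix.mul_apply_of_row_eq_single (LmatN_row_tailIdx_succ lam th th' k)] at h
  calc u (tailIdx k.succ) (tailIdx k.castSucc)
      = u (tailIdx k.succ) (tailIdx k.castSucc) * tpow c * tpow (-c) := by
        rw [mul_assoc, ← tpow_add, add_neg_cancel, tpow_zero, mul_one]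
    _ = tpow (th' k - c) * C (tailIdx k.succ) (tailIdx k.castSucc) := by
        rw [h, mul_right_comm, ← tpow_add, ← sub_eq_add_neg]

lemma chiU_eq_zero_of_mul_LmatN_eq
    (hθ : ∀ k : Fin K, Matrix.vecCons (th (Fin.last M)) th' k.castSucc ≤ th' k)
    (hC : ∀ i j, C i j ∈ Oint) (heq : u * LmatN M K lam th th' = LmatN M K lam th th' * C) :
    chiU M K u = 0 := by
  rw [chiU_eq_sum]
  refine Finset.sum_eq_zero fun k _ => ?_
  rw [apply_tailIdx_of_mul_LmatN_eq heq, coeff_tpow_mul]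
  exact hC _ _ _ (by linarith [hθ k])

end Stabilizer

lemma inGLO_one_add_single {n : ℕ} {i j : Fin n} (hij : i ≠ j) {x : F} (hx : x ∈ Oint) :
    InGLO (1 + Matrix.single i j x) := by
  have hmem : ∀ y ∈ Oint, ∀ r s, (1 + Matrix.single i j y) r s ∈ Oint := by
    intro y hy r s
    rw [Matrix.add_apply, Matrix.one_apply, Matrix.single_apply]
    refine add_mem_Oint ?_ ?_ <;> split_ifs
    exacts [one_mem_Oint, zero_mem_Oint, hy, zero_mem_Oint]
  have hinv : ∀ y z : F, y + z = 0 →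
      (1 + Matrix.single i j y) * (1 + Matrix.single i j z) = 1 := by
    intro y z hyz
    calc (1 + Matrix.single i j y) * (1 + Matrix.single i j z)
        = 1 + Matrix.single i j (y + z) + Matrix.single i j y * Matrix.single i j z := by
          rw [Matrix.single_add]; noncomm_ring
      _ = 1 := by
          rw [hyz, Matrix.single_mul_single_of_ne (h := hij.symm), Matrix.single_zero,
            add_zero, add_zero]
  exact ⟨1 + Matrix.single i j (-x), hmem x hx, hmem (-x) (neg_mem_Oint hx),
    hinv _ _ (add_neg_cancel x), hinv _ _ (neg_add_cancel x)⟩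

section Witness

open Matrix

variable {M K : ℕ} (lam : Fin M → ℤ) (th : Fin (M + 1) → ℤ) (th' : Fin K → ℤ)

/-- Subtracting these multiples of the rows `topIdx i` of `L` from row `tailIdx k` clears the
latter outside its diagonal entry. -/
def witnessRow (k : Fin (K + 1)) : Fin (M + 1 + K) → F :=
  tpow (-1) • (Pi.single (tailIdx k) 1 - ∑ i : Fin M, Pi.single (topIdx i)
    (LmatN M K lam th th' (tailIdx k) (topIdx i) * tpow (-(lam i + th i.castSucc))))

lemma witnessRow_vecMul (k : Fin (K + 1)) :
    witnessRow lam th th' k ᵥ* LmatN M K lam th th' =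
      Pi.single (tailIdx k) (tpow (Matrix.vecCons (th (Fin.last M)) th' k - 1)) := by
  have hrow : ∀ i : Fin M, ∀ a : F,
      Pi.single (topIdx i) (a * tpow (-(lam i + th i.castSucc))) ᵥ* LmatN M K lam th th' =
        Pi.single (topIdx (K := K) i) a := by
    intro i a
    rw [single_vecMul, LmatN_row_topIdx, smul_piSingle, mul_assoc, ← tpow_add,
      neg_add_cancel, tpow_zero, mul_one]
  rw [witnessRow, smul_vecMul, sub_vecMul, sum_vecMul]
  simp only [hrow]
  rw [single_one_vecMul, LmatN_row_tailIdx, add_sub_cancel_left, smul_piSingle,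
    ← tpow_add, neg_add_eq_sub]

lemma witnessRow_apply_of_le (k : Fin (K + 1)) {b : Fin (M + 1 + K)} (hb : M ≤ (b : ℕ)) :
    witnessRow lam th th' k b = if b = tailIdx k then tpow (-1) else 0 := by
  have htop : ∀ i : Fin M, b ≠ topIdx i := fun i h => by
    have := congrArg Fin.val h; simp [topIdx] at this; omega
  simp [witnessRow, Finset.sum_apply, Pi.single_apply, htop]

def witness (k : Fin K) : Matrix (Fin (M + 1 + K)) (Fin (M + 1 + K)) F :=
  1 + vecMulVec (Pi.single (tailIdx k.succ) 1) (witnessRow lam th th' k.castSucc)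

lemma witness_apply (k : Fin K) (a b : Fin (M + 1 + K)) :
    witness lam th th' k a b =
      (1 : Matrix _ _ F) a b +
        if a = tailIdx k.succ then witnessRow lam th th' k.castSucc b else 0 := by
  simp [witness, vecMulVec_apply, Pi.single_apply]

lemma inUminus_witness (k : Fin K) : InUminus M (witness lam th th' k) := by
  have hrow : ∀ b : Fin (M + 1 + K), ((tailIdx k.succ : Fin (M + 1 + K)) : ℕ) ≤ b →
      witnessRow lam th th' k.castSucc b = 0 := fun b hb => by
    rw [witnessRow_apply_of_le lam th th' k.castSucc (b := b) (by simp [tailIdx] at hb ⊢; omega),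
      if_neg]
    rintro rfl
    simp [tailIdx] at hb
  refine ⟨fun a => ?_, fun a b hab hab' => ?_⟩
  · rw [witness_apply, Matrix.one_apply_eq]
    split_ifs with ha
    · rw [hrow a ha.ge, add_zero]
    · rw [add_zero]
  · rw [witness_apply, Matrix.one_apply_ne hab, zero_add]
    split_ifs with ha
    · subst ha
      exact hrow b (by simp [tailIdx] at hab' ⊢; omega)
    · rfl

lemma chiU_witness (k : Fin K) : chiU M K (witness lam th th' k) = 1 := by
  rw [chiU_eq_sum, Finset.sum_eq_single k]
  · rw [witness_apply, Matrix.one_apply_ne (tailIdx_succ_ne_castSucc k), zero_add, if_pos rfl,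
      witnessRow_apply_of_le _ _ _ _ (by simp [tailIdx]), if_pos rfl, tpow_eq_single,
      HahnSeries.coeff_single_same]
  · intro k' _ hk'
    rw [witness_apply, Matrix.one_apply_ne (tailIdx_succ_ne_castSucc k'), zero_add,
      if_neg (tailIdx_injective.ne ((Fin.succ_injective _).ne hk')), HahnSeries.coeff_zero]
  · exact fun h => absurd (Finset.mem_univ k) h

lemma witness_mul_LmatN (k : Fin K) :
    witness lam th th' k * LmatN M K lam th th' =
      LmatN M K lam th th' * (1 + single (tailIdx k.succ) (tailIdx k.castSucc)
        (tpow (vecCons (th (Fin.last M)) th' k.castSucc - 1 - th' k))) := by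
  rw [witness, add_mul, one_mul, vecMulVec_mul, witnessRow_vecMul, vecMulVec_single_one_single,
    mul_add, mul_one, mul_single_of_col_eq_single (LmatN_col_tailIdx lam th th' k.succ),
    cons_val_succ, ← tpow_add, add_sub_cancel]

end Witness

lemma monotone_vecCons_iff {α : Type*} [Preorder α] {n : ℕ} {a : α} {f : Fin n → α} :
    Monotone (Matrix.vecCons a f) ↔ Monotone f ∧ ∀ k, a ≤ f k := by
  cases n with
  | zero => exact iff_of_true (Subsingleton.monotone _) ⟨Subsingleton.monotone _, finZeroElim⟩
  | succ n =>
    rw [monotone_vecCons]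
    exact ⟨fun ⟨ha, hf⟩ => ⟨hf, fun k => ha.trans (hf (Fin.zero_le k))⟩,
      fun ⟨hf, ha⟩ => ⟨ha 0, hf⟩⟩

theorem stmt2_general (M K : ℕ) (lam : Fin M → ℤ) (th : Fin (M + 1) → ℤ) (th' : Fin K → ℤ) :
    (∀ u C : Matrix (Fin (M + 1 + K)) (Fin (M + 1 + K)) F,
        InUminus M u → InGLO C →
        u * LmatN M K lam th th' = LmatN M K lam th th' * C → chiU M K u = 0)
    ↔ (Monotone th' ∧ ∀ k : Fin K, th (Fin.last M) ≤ th' k) := by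
  rw [← monotone_vecCons_iff, Fin.monotone_iff_le_succ]
  simp only [Matrix.cons_val_succ]
  constructor
  · intro h k
    by_contra! hlt
    have := h _ _ (inUminus_witness lam th th' k)
      (inGLO_one_add_single (tailIdx_succ_ne_castSucc k) (tpow_mem_Oint (by omega)))
      (witness_mul_LmatN lam th th' k)
    rw [chiU_witness] at this
    exact one_ne_zero this
  · rintro h u C - ⟨-, hC, -⟩ heq
    exact chiU_eq_zero_of_mul_LmatN_eq h hC heq

/-- For a dominant `(λ,θ)`, the stabilizer of `L_{(λ,(θ,θ'))} ∈ Gr_N` in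
`U⁻_{M,N}(F)` is contained in `ker χ` if and only if
`θ_{M+1} ≤ θ'_1 ≤ θ'_2 ≤ … ≤ θ'_{N-M-1}`. -/
theorem stmt2 (M K : ℕ) (lam : Fin M → ℤ) (th : Fin (M + 1) → ℤ) (th' : Fin K → ℤ)
    (hlam : Monotone lam) (hth : Monotone th) :
    (∀ u C : Matrix (Fin (M + 1 + K)) (Fin (M + 1 + K)) F,
        InUminus M u → InGLO C →
        u * LmatN M K lam th th' = LmatN M K lam th th' * C → chiU M K u = 0)
    ↔ (Monotone th' ∧ ∀ k : Fin K, th (Fin.last M) ≤ th' k) :=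
  stmt2_general M K lam th th'
end
end

section
/- (Degree of the diagonal character computation.) Let B ∈ GL_N(C((t))) lie in the set B of cosets with representative lower-triangular-block form: diagonal entries t^{-η_1},...,t^{-η_{M+1}}, t^{-η'_1},...,t^{-η'_{N-M-1}} and arbitrary entries below the diagonal; and suppose B also lies in the set A of cosets through an upper-triangular-type element with unit diagonal in rows M+1,...,N. Fix M+1 ≤ i ≤ N-1 and suppose η'_{i-M} + η'_{i-M+1} + ... + η'_{N-M-1} = 0 together with the inequalities η'_{j} + ... + η'_{N-M-1} ≤ 0 for all j and η_{M+1} + η'_1 + ... + η'_{N-M-1} ≤ 0. Then for any representative A of this coset in the first form, the entry A_{i,i+1} lies in C[[t]]. -/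
/- Common setup: `F = ℂ((t))` the field of formal Laurent series, `O = ℂ[[t]]` its ring of
integers (elements with no negative coefficients), `tpow k = t^k`.  `InGLO A` says that the
square matrix `A` lies in `GL(O)`, i.e. both `A` and an inverse of `A` have entries in `O`. -/

noncomputable section

/-- Concatenation of `η : ℤ^{M+1}` and `η' : ℤ^{K}` into a sequence of length `N=M+1+K`. -/
def fullSeq (M K : ℕ) (eta : Fin (M + 1) → ℤ) (eta' : Fin K → ℤ) :
    Fin (M + 1 + K) → ℤ := fun i =>
  if h : (i : ℕ) < M + 1 then eta ⟨i, h⟩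
  else eta' ⟨(i : ℕ) - (M + 1), by have := i.isLt; omega⟩

/-- Form `𝔄` of (9.13): upper triangular, diagonal `(t^{ξ_1},…,t^{ξ_M},1,…,1)`, and the
entries of column `M+1` in the top `M` rows all equal to `1`. -/
def InFormA (M K : ℕ) (xi : Fin M → ℤ)
    (X : Matrix (Fin (M + 1 + K)) (Fin (M + 1 + K)) F) : Prop :=
  (∀ i j : Fin (M + 1 + K), (j : ℕ) < (i : ℕ) → X i j = 0) ∧
  (∀ i : Fin (M + 1 + K), ∀ h : (i : ℕ) < M, X i i = tpow (xi ⟨i, h⟩)) ∧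
  (∀ i : Fin (M + 1 + K), M ≤ (i : ℕ) → X i i = 1) ∧
  (∀ i : Fin (M + 1 + K), (i : ℕ) < M → X i ⟨M, by omega⟩ = 1)

/-- Form `𝔅` of (9.13): lower triangular with diagonal
`(t^{-η_1},…,t^{-η_{M+1}},t^{-η'_1},…,t^{-η'_K})`. -/
def InFormB (M K : ℕ) (eta : Fin (M + 1) → ℤ) (eta' : Fin K → ℤ)
    (Y : Matrix (Fin (M + 1 + K)) (Fin (M + 1 + K)) F) : Prop :=
  (∀ i j : Fin (M + 1 + K), (i : ℕ) < (j : ℕ) → Y i j = 0) ∧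
  (∀ i, Y i i = tpow (-(fullSeq M K eta eta' i)))

/-! Write `Y = X c'` with `c' = c⁻¹ ∈ GL_N(O)`. On the rows `i₀, …, N-1` the upper triangular
`X` has the shape `[0 | U]` with `U` unipotent, so each maximal minor of these rows of `Y` is a
maximal minor of `c'`, hence integral. The minor in the columns `j, i₀+1, …, N-1` is triangular
and equals `Y_{i₀ j}` times `t^{-(η'_{i₀+1-M} + ⋯ + η'_{N-M-1})} = 1`. So row `i₀` of `Y` is
integral, and therefore so is `X_{i₀, i₀+1} = (Y c)_{i₀, i₀+1}`. -/

namespace Matrix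

variable {R : Type*} [CommRing R]

theorem submatrix_mul_of_forall_notMem_range {l n o p q r : Type*} [Fintype n] [Fintype q]
    (X : Matrix l n R) (c : Matrix n o R) (e₁ : p → l) {e₂ : q → n} (he₂ : e₂.Injective)
    (e₃ : r → o) (hX : ∀ i k, k ∉ Set.range e₂ → X (e₁ i) k = 0) :
    (X * c).submatrix e₁ e₃ = X.submatrix e₁ e₂ * c.submatrix e₂ e₃ := by
  ext i j
  simp only [submatrix_apply, mul_apply]
  exact (Fintype.sum_of_injective e₂ he₂ _ _ (fun k hk => by rw [hX i k hk, zero_mul])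
    fun _ => rfl).symm

theorem det_mem_of_forall_mem {n : Type*} [Fintype n] [DecidableEq n] (S : Subring R)
    {A : Matrix n n R} (hA : ∀ i j, A i j ∈ S) : A.det ∈ S := by
  have : A = S.subtype.mapMatrix (Matrix.of fun i j => (⟨A i j, hA i j⟩ : S)) := rfl
  rw [this, ← RingHom.map_det]
  exact SetLike.coe_mem _

theorem det_submatrix_mul_mem {ι κ : Type*} [Fintype ι] [LinearOrder ι] [Fintype κ]
    [LinearOrder κ] (S : Subring R) {X : Matrix ι ι R} (hX : X.IsUpperTriangular) {i₀ : ι}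
    (hX₁ : ∀ i, i₀ ≤ i → X i i = 1) {e : κ → ι} (he : StrictMono e)
    (he' : Set.range e = Set.Ici i₀) {c : Matrix ι ι R} (hc : ∀ i j, c i j ∈ S) (T : κ → ι) :
    ((X * c).submatrix e T).det ∈ S := by
  have hle : ∀ a, i₀ ≤ e a := fun a => by
    simpa only [he', Set.mem_Ici] using Set.mem_range_self (f := e) a
  have hsupp : ∀ a k, k ∉ Set.range e → X (e a) k = 0 := fun a k hk =>
    hX (lt_of_lt_of_le (not_le.mp (by simpa only [he', Set.mem_Ici, id] using hk)) (hle a))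
  have hdet : (X.submatrix e e).det = 1 := by
    rw [det_of_isUpperTriangular (M := X.submatrix e e) fun a b hab => hX (he hab)]
    exact Finset.prod_eq_one fun a _ => hX₁ _ (hle a)
  rw [submatrix_mul_of_forall_notMem_range X c e he.injective T hsupp, det_mul, hdet, one_mul]
  exact det_mem_of_forall_mem S fun a b => hc _ _

theorem det_submatrix_cons_of_isLowerTriangular {ι : Type*} [LinearOrder ι]
    {Y : Matrix ι ι R} (hY : Y.IsLowerTriangular) {m : ℕ} {e : Fin (m + 1) → ι}
    (he : StrictMono e) (j : ι) :
    (Y.submatrix e (Fin.cons j (e ∘ Fin.succ))).det =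
      Y (e 0) j * ∏ b : Fin m, Y (e b.succ) (e b.succ) := by
  rw [det_of_isLowerTriangular, Fin.prod_univ_succ]
  · simp
  · intro a b hab
    cases b using Fin.cases with
    | zero => exact absurd hab (Fin.not_lt_zero a)
    | succ b => exact hY (he hab)

end Matrix

def OintSubring : Subring F where
  carrier := Oint
  zero_mem' _ _ := HahnSeries.coeff_zero
  one_mem' m hm := by rw [HahnSeries.coeff_one, if_neg hm.ne]
  add_mem' hf hg m hm := by rw [HahnSeries.coeff_add, hf m hm, hg m hm, add_zero]
  neg_mem' hf m hm := by rw [HahnSeries.coeff_neg, hf m hm, neg_zero]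
  mul_mem' {f g} hf hg m hm := by
    rw [HahnSeries.coeff_mul]
    refine Finset.sum_eq_zero fun ij hij => ?_
    obtain ⟨-, -, hsum⟩ := Finset.mem_antidiagonal.mp hij
    rcases lt_or_ge ij.1 0 with h₁ | h₁
    · rw [hf _ h₁, zero_mul]
    · rw [hg _ (by omega), mul_zero]

theorem prod_tpow {ι : Type*} (s : Finset ι) (e : ι → ℤ) :
    ∏ i ∈ s, tpow (e i) = tpow (∑ i ∈ s, e i) := by
  classical
  induction s using Finset.induction_on with
  | empty => simp [tpow]
  | insert a s ha ih =>
    rw [Finset.prod_insert ha, Finset.sum_insert ha, ih, tpow, tpow, tpow,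
      zpow_add₀ (HahnSeries.single_ne_zero one_ne_zero)]

def rowsFrom {n : ℕ} (i₀ m : ℕ) (h : i₀ + m = n) : Fin m → Fin n := fun a => ⟨i₀ + a, by omega⟩

theorem rowsFrom_strictMono {n i₀ m : ℕ} (h : i₀ + m = n) : StrictMono (rowsFrom i₀ m h) :=
  fun _ _ hab => Fin.mk_lt_mk.mpr (Nat.add_lt_add_left hab i₀)

theorem range_rowsFrom {n i₀ m : ℕ} (h : i₀ + m = n) (hi : i₀ < n) :
    Set.range (rowsFrom i₀ m h) = Set.Ici ⟨i₀, hi⟩ := by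
  ext k
  refine ⟨?_, fun hk => ⟨⟨k - i₀, by omega⟩, Fin.ext ?_⟩⟩
  · rintro ⟨a, rfl⟩
    exact Fin.mk_le_mk.mpr (Nat.le_add_right _ _)
  · simp only [rowsFrom]
    have : i₀ ≤ (k : ℕ) := hk
    omega

theorem Fin.sum_ite_le_eq {A : Type*} [AddCommMonoid A] {s m K : ℕ} (h : s + m = K)
    (f : Fin K → A) :
    ∑ l : Fin K, (if s ≤ (l : ℕ) then f l else 0) = ∑ b : Fin m, f ⟨s + b, by omega⟩ := by
  subst h
  rw [Fin.sum_univ_add, Fintype.sum_eq_zero _ fun l => if_neg (by simp), zero_add]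
  exact Fintype.sum_congr _ _ fun b => if_pos (Nat.le_add_right s b)

theorem sum_fullSeq_rowsFrom_succ {M K i₀ m : ℕ} (eta : Fin (M + 1) → ℤ) (eta' : Fin K → ℤ)
    (hM : M ≤ i₀) (h : i₀ + (m + 1) = M + 1 + K) :
    ∑ b : Fin m, fullSeq M K eta eta' (rowsFrom i₀ (m + 1) h b.succ) =
      ∑ l : Fin K, if i₀ - M ≤ (l : ℕ) then eta' l else 0 := by
  rw [Fin.sum_ite_le_eq (m := m) (by omega)]
  refine Finset.sum_congr rfl fun b _ => ?_
  have hb : rowsFrom i₀ (m + 1) h b.succ = ⟨i₀ + (b + 1), by omega⟩ := rfl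
  rw [hb, fullSeq, dif_neg (by simp only; omega)]
  exact congrArg eta' (Fin.ext (by simp only; omega))

/-- (Degree of the diagonal character computation.)  Suppose a coset of
`Gr_N` (`N = M+1+K`) has a representative `X` of form `𝔄` and a representative `Y` of
form `𝔅` (so `X = Y·c` for some `c ∈ GL_N(O)`), fix `M+1 ≤ i ≤ N-1` (1-based; 0-based
`i₀` with `M ≤ i₀`, `i₀+1 < N`), and assume `η'_{i-M} + … + η'_{N-M-1} = 0` together with
`η'_j + … + η'_{N-M-1} ≤ 0` for all `j` and `η_{M+1} + η'_1 + … + η'_{N-M-1} ≤ 0`.  Then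
the entry `X_{i,i+1}` lies in `ℂ[[t]]`. -/
theorem stmt17 (M K : ℕ) (xi : Fin M → ℤ) (eta : Fin (M + 1) → ℤ) (eta' : Fin K → ℤ)
    (i₀ : ℕ) (hi1 : M ≤ i₀) (hi2 : i₀ + 1 < M + 1 + K)
    (hzero : (∑ l : Fin K, if i₀ - M ≤ (l : ℕ) then eta' l else 0) = 0)
    (X Y c : Matrix (Fin (M + 1 + K)) (Fin (M + 1 + K)) F)
    (hX : InFormA M K xi X) (hY : InFormB M K eta eta' Y) (hc : InGLO c)
    (hXY : X = Y * c) :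
    X ⟨i₀, by omega⟩ ⟨i₀ + 1, hi2⟩ ∈ Oint := by
  obtain ⟨hXut, -, hXd, -⟩ := hX
  obtain ⟨hYlt, hYd⟩ := hY
  obtain ⟨c', hcO, hc'O, hcc', -⟩ := hc
  have hYX : Y = X * c' := by rw [hXY, Matrix.mul_assoc, hcc', Matrix.mul_one]
  obtain ⟨m, hm⟩ : ∃ m, i₀ + (m + 1) = M + 1 + K := ⟨M + K - i₀, by omega⟩
  have he := rowsFrom_strictMono hm
  set e := rowsFrom i₀ (m + 1) hm
  have hdiag : ∏ b : Fin m, Y (e b.succ) (e b.succ) = 1 := by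
    rw [Finset.prod_congr rfl fun b _ => hYd (e b.succ), prod_tpow, Finset.sum_neg_distrib,
      sum_fullSeq_rowsFrom_succ eta eta' hi1, hzero, neg_zero, tpow, zpow_zero]
  have hrow : ∀ j, Y (e 0) j ∈ OintSubring := fun j => by
    have := Matrix.det_submatrix_mul_mem OintSubring hXut (fun i hi => hXd i (hi1.trans hi)) he
      (range_rowsFrom hm (by omega)) hc'O (Fin.cons j (e ∘ Fin.succ))
    rwa [← hYX, Matrix.det_submatrix_cons_of_isLowerTriangular hYlt he, hdiag, mul_one] at this
  rw [hXY, Matrix.mul_apply]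
  exact sum_mem fun k _ => mul_mem (hrow k) (hcO k _)
end
end
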